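/- arXiv:2305.08405 — 2 statements merged into one kernel-verified Lean document; each statement's English description precedes it below -/
import Mathlib

section
/- If G is a finite group and N is an abelian minimal normal subgroup of G, then for every non-identity element x in N, and any elements g₁,...,g_t of G whose images generate G/N, the set {g₁,...,g_t, x} generates G. In particular d(G) ≤ d(G/N) + 1. -/
/-!
Let `H` contain `x` and map onto `G/N`, so that `H ⊔ N = G`. Then `H ⊓ N` is normalized by `H`
and, `N` being abelian, centralized by `N`; hence it is normal in `G`. It contains `x ≠ 1`, so
minimality forces `H ⊓ N = N`, i.e. `N ≤ H`, and `H = H ⊔ N = G`. Lifting a minimal generating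
set of `G/N` and adding one such `x` gives the rank bound.
-/

namespace Subgroup

variable {G : Type*} [Group G] {H N : Subgroup G}

theorem sup_eq_top_of_map_mk'_eq_top [N.Normal] (h : H.map (QuotientGroup.mk' N) = ⊤) :
    H ⊔ N = ⊤ := by
  simpa [comap_map_eq] using congrArg (comap (QuotientGroup.mk' N)) h

theorem normal_inf_of_sup_eq_top [N.Normal] [IsMulCommutative N] (h : H ⊔ N = ⊤) :
    (H ⊓ N).Normal := by
  rw [← normalizer_eq_top_iff, eq_top_iff, ← h]
  refine sup_le ?_ ?_
  · exact (le_inf H.le_normalizer le_normalizer_of_normal).trans inf_normalizer_le_normalizer_inf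
  · exact (N.le_centralizer.trans (centralizer_le inf_le_right)).trans (centralizer_le_normalizer _)

theorem eq_top_of_sup_eq_top_of_inf_ne_bot [N.Normal] [IsMulCommutative N]
    (hmin : ∀ K : Subgroup G, K.Normal → K ≤ N → K = ⊥ ∨ K = N)
    (hsup : H ⊔ N = ⊤) (hinf : H ⊓ N ≠ ⊥) : H = ⊤ := by
  have hN : H ⊓ N = N :=
    (hmin _ (normal_inf_of_sup_eq_top hsup) inf_le_right).resolve_left hinf
  rwa [sup_eq_left.mpr (inf_eq_right.mp hN)] at hsup

theorem closure_union_singleton_eq_top [N.Normal] [IsMulCommutative N]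
    (hmin : ∀ K : Subgroup G, K.Normal → K ≤ N → K = ⊥ ∨ K = N) {s : Set G}
    (hs : closure ((↑) '' s : Set (G ⧸ N)) = ⊤) {x : G} (hxN : x ∈ N) (hx1 : x ≠ 1) :
    closure (s ∪ {x}) = ⊤ := by
  refine eq_top_of_sup_eq_top_of_inf_ne_bot hmin ?_ ?_
  · refine sup_eq_top_of_map_mk'_eq_top (top_le_iff.mp ?_)
    rw [MonoidHom.map_closure, ← hs]
    exact closure_mono (Set.image_mono Set.subset_union_left)
  · exact ne_bot_iff_exists_ne_one.mpr
      ⟨⟨x, subset_closure (Or.inr rfl), hxN⟩, fun h => hx1 (congrArg Subtype.val h)⟩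

end Subgroup

theorem Group.rank_le_rank_quotient_add_one {G : Type*} [Group G] [Group.FG G] {N : Subgroup G}
    [N.Normal] {x : G}
    (h : ∀ s : Set G, Subgroup.closure ((↑) '' s : Set (G ⧸ N)) = ⊤ →
      Subgroup.closure (s ∪ {x}) = ⊤) :
    Group.rank G ≤ Group.rank (G ⧸ N) + 1 := by
  classical
  obtain ⟨S, hScard, hS⟩ := Group.rank_spec (G ⧸ N)
  have hlift : ((↑) '' (S.image Quotient.out : Set G) : Set (G ⧸ N)) = S := by
    simp [Set.image_image]
  calc Group.rank G ≤ (S.image Quotient.out ∪ {x}).card := by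
        refine Group.rank_le ?_
        rw [Finset.coe_union, Finset.coe_singleton]
        exact h _ (hlift ▸ hS)
    _ ≤ S.card + 1 :=
        (Finset.card_union_le _ _).trans (add_le_add Finset.card_image_le le_rfl)
    _ = Group.rank (G ⧸ N) + 1 := by rw [hScard]

/-- If `G` is a finite group and `N` is an abelian minimal normal subgroup of `G`, then for
every non-identity `x ∈ N` and any `g₁, …, g_t` whose images generate `G/N`, the set
`{g₁, …, g_t, x}` generates `G`; in particular `d(G) ≤ d(G/N) + 1`. -/
theorem stmt0 {G : Type*} [Group G] [Finite G] (N : Subgroup G) [N.Normal]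
    (hab : ∀ a b : N, a * b = b * a)
    (hne : N ≠ ⊥)
    (hmin : ∀ K : Subgroup G, K.Normal → K ≤ N → K = ⊥ ∨ K = N) :
    (∀ (x : G), x ∈ N → x ≠ 1 → ∀ (t : ℕ) (g : Fin t → G),
      Subgroup.closure (Set.range fun i => ((g i : G) : G ⧸ N)) = ⊤ →
      Subgroup.closure (Set.range g ∪ {x}) = ⊤) ∧
    Group.rank G ≤ Group.rank (G ⧸ N) + 1 := by
  have : IsMulCommutative N := ⟨⟨hab⟩⟩
  refine ⟨fun x hxN hx1 t g hg => ?_, ?_⟩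
  · exact Subgroup.closure_union_singleton_eq_top hmin (by rwa [← Set.range_comp]) hxN hx1
  · obtain ⟨⟨x, hxN⟩, hx1⟩ := Subgroup.ne_bot_iff_exists_ne_one.mp hne
    exact Group.rank_le_rank_quotient_add_one fun s hs =>
      Subgroup.closure_union_singleton_eq_top hmin hs hxN fun h => hx1 (Subtype.ext h)
end

section
/- (Gaschütz) Let G be a finite group and N a normal subgroup of G. If g₁,...,g_t are elements of G whose images generate G/N, and G can be generated by t elements, then there exist x₁,...,x_t ∈ N such that G = ⟨g₁x₁,...,g_tx_t⟩. -/
/-!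
Gaschütz's counting argument. For a subgroup `H` of `G`, the number of `x ∈ Nᵗ` with `gᵢxᵢ ∈ H`
for all `i` is `|H ⊓ N|ᵗ` if `H ⊔ N = G` and `0` otherwise, for every tuple `g` whose image
generates `G/N`. This number is the sum, over `K ≤ H`, of the number of `x ∈ Nᵗ` with
`⟨gᵢxᵢ⟩ = K`; by Möbius inversion over the subgroup lattice, the latter numbers do not depend on
`g` either. For a tuple `g'` generating `G` itself, `x = 1` is such that `⟨g'ᵢxᵢ⟩ = G`, so the
count for `K = G` is positive.
-/

open Finset Subgroup
open scoped Classical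

theorem eq_of_forall_sum_filter_le_eq {α M : Type*} [PartialOrder α] [Fintype α]
    [AddCancelCommMonoid M] {f f' : α → M}
    (h : ∀ a, ∑ b with b ≤ a, f b = ∑ b with b ≤ a, f' b) : f = f' := by
  funext a
  induction a using WellFoundedLT.induction with
  | _ a ih =>
    have hle : ({b | b ≤ a} : Finset α) = cons a {b | b < a} (by simp) := by
      ext b; simp [le_iff_eq_or_lt]
    have := h a
    rwa [hle, sum_cons, sum_cons, sum_congr rfl fun b hb => ih b (mem_filter.mp hb).2,
      add_left_inj] at this

namespace Gaschuetz

variable {G : Type*} [Group G]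

theorem forall_mem_iff_eq_top_of_closure_range_mk_eq_top (N : Subgroup G) [N.Normal] {t : ℕ}
    {g : Fin t → G} (hg : closure (Set.range fun i => (g i : G ⧸ N)) = ⊤) {K : Subgroup G}
    (hK : N ≤ K) : (∀ i, g i ∈ K) ↔ K = ⊤ := by
  refine ⟨fun hgK => ?_, fun hK i => hK ▸ mem_top _⟩
  have hmap : K.map (QuotientGroup.mk' N) = ⊤ := by
    rw [eq_top_iff, ← hg, closure_le]
    rintro _ ⟨i, rfl⟩
    exact ⟨g i, hgK i, rfl⟩
  simpa [hmap, hK] using (QuotientGroup.comap_map_mk' N K).symm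

theorem closure_range_mk_eq_top (N : Subgroup G) [N.Normal] {t : ℕ} {g : Fin t → G}
    (hg : closure (Set.range g) = ⊤) : closure (Set.range fun i => (g i : G ⧸ N)) = ⊤ := by
  rw [show (Set.range fun i => (g i : G ⧸ N)) = QuotientGroup.mk' N '' Set.range g from
    Set.range_comp _ _, ← MonoidHom.map_closure, hg,
    ← MonoidHom.range_eq_map, MonoidHom.range_eq_top]
  exact QuotientGroup.mk'_surjective N

theorem exists_closure_range_eq_top_of_rank_le [Group.FG G] {t : ℕ} (ht : Group.rank G ≤ t) :
    ∃ g : Fin t → G, closure (Set.range g) = ⊤ := by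
  obtain ⟨S, hS, hSgen⟩ := Group.rank_spec G
  have hSt : #S ≤ t := hS ▸ ht
  refine ⟨fun i => if hi : (i : ℕ) < #S then S.equivFin.symm ⟨i, hi⟩ else 1, ?_⟩
  rw [eq_top_iff, ← hSgen]
  refine closure_mono fun s hs => ⟨Fin.castLE hSt (S.equivFin ⟨s, hs⟩), ?_⟩
  simp

variable [Fintype G]

theorem card_filter_mem_mul_mem (N H : Subgroup G) [N.Normal] (a : G) :
    #{n | n ∈ N ∧ a * n ∈ H} = if a ∈ H ⊔ N then Nat.card (H ⊓ N : Subgroup G) else 0 := by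
  split_ifs with ha
  · obtain ⟨h, hh, n₀, hn₀, rfl⟩ := mem_sup_of_normal_right.mp ha
    have himage : ({n | n ∈ N ∧ h * n₀ * n ∈ H} : Finset G)
        = (H ⊓ N : Subgroup G).carrier.toFinset.image (n₀⁻¹ * ·) := by
      ext n
      simp [mul_assoc, mul_mem_cancel_left hh, mul_mem_cancel_left hn₀, and_comm]
    rw [himage, card_image_of_injective _ (mul_right_injective _), Set.toFinset_card,
      Nat.card_eq_fintype_card]
    rfl
  · rw [card_eq_zero, filter_eq_empty_iff]
    rintro n - ⟨hn, hanH⟩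
    exact ha (by simpa using mul_mem_sup hanH (inv_mem hn))

variable (N : Subgroup G) {t : ℕ}

noncomputable def liftsInto (H : Subgroup G) (g : Fin t → G) : Finset (Fin t → G) :=
  {x | ∀ i, x i ∈ N ∧ g i * x i ∈ H}

noncomputable def liftsGenerating (H : Subgroup G) (g : Fin t → G) : Finset (Fin t → G) :=
  {x | (∀ i, x i ∈ N) ∧ closure (Set.range fun i => g i * x i) = H}

theorem card_liftsInto [N.Normal] {g : Fin t → G}
    (hg : closure (Set.range fun i => (g i : G ⧸ N)) = ⊤) (H : Subgroup G) :
    #(liftsInto N H g) = if H ⊔ N = ⊤ then Nat.card (H ⊓ N : Subgroup G) ^ t else 0 := by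
  have hpi : liftsInto N H g = Fintype.piFinset fun i => {n | n ∈ N ∧ g i * n ∈ H} := by
    ext x
    simp [liftsInto]
  simp_rw [hpi, Fintype.card_piFinset, card_filter_mem_mul_mem, prod_ite_zero, prod_const,
    mem_univ, true_imp_iff, card_univ, Fintype.card_fin,
    forall_mem_iff_eq_top_of_closure_range_mk_eq_top N hg le_sup_right]

theorem card_liftsInto_eq_sum (H : Subgroup G) (g : Fin t → G) :
    #(liftsInto N H g) = ∑ K with K ≤ H, #(liftsGenerating N K g) := by
  rw [card_eq_sum_card_fiberwise (f := fun x => closure (Set.range fun i => g i * x i))]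
  · refine sum_congr rfl fun K hK => congrArg card ?_
    ext x
    simp only [liftsInto, liftsGenerating, mem_filter, mem_univ, true_and, and_congr_left_iff]
    rintro rfl
    exact forall_congr' fun i =>
      and_iff_left_of_imp fun _ => (mem_filter.mp hK).2 (subset_closure ⟨i, rfl⟩)
  · intro x hx
    simp only [liftsInto, coe_filter, Set.mem_ofPred_eq, mem_univ, true_and] at hx ⊢
    exact (closure_le H).2 (Set.range_subset_iff.2 fun i => (hx i).2)

theorem card_liftsGenerating_eq [N.Normal] {g g' : Fin t → G}
    (hg : closure (Set.range fun i => (g i : G ⧸ N)) = ⊤)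
    (hg' : closure (Set.range fun i => (g' i : G ⧸ N)) = ⊤) (H : Subgroup G) :
    #(liftsGenerating N H g) = #(liftsGenerating N H g') := by
  have hcounts : (fun K => #(liftsGenerating N K g)) = fun K => #(liftsGenerating N K g') :=
    eq_of_forall_sum_filter_le_eq fun K => by
      rw [← card_liftsInto_eq_sum, ← card_liftsInto_eq_sum, card_liftsInto N hg,
        card_liftsInto N hg']
  exact congrFun hcounts H

end Gaschuetz

/-- Gaschütz: if the images of `g₁, …, g_t` generate `G/N` and `G` can be generated by `t`
elements, then there exist `x₁, …, x_t ∈ N` with `G = ⟨g₁x₁, …, g_tx_t⟩`. -/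
theorem stmt2 {G : Type*} [Group G] [Finite G] (N : Subgroup G) [N.Normal]
    (t : ℕ) (g : Fin t → G)
    (hgen : Subgroup.closure (Set.range fun i => ((g i : G) : G ⧸ N)) = ⊤)
    (hd : Group.rank G ≤ t) :
    ∃ x : Fin t → G, (∀ i, x i ∈ N) ∧
      Subgroup.closure (Set.range fun i => g i * x i) = ⊤ := by
  have : Fintype G := Fintype.ofFinite G
  obtain ⟨g', hg'⟩ := Gaschuetz.exists_closure_range_eq_top_of_rank_le hd
  have hone : 1 ∈ Gaschuetz.liftsGenerating N ⊤ g' := by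
    simpa [Gaschuetz.liftsGenerating] using hg'
  have hcount := Gaschuetz.card_liftsGenerating_eq N hgen
    (Gaschuetz.closure_range_mk_eq_top N hg') ⊤
  obtain ⟨x, hx⟩ := card_pos.mp (hcount ▸ card_pos.mpr ⟨1, hone⟩)
  exact ⟨x, by simpa [Gaschuetz.liftsGenerating] using hx⟩
end
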